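/- arXiv:1407.0316 — 2 statements merged into one kernel-verified Lean document; each statement's English description precedes it below -/
import Mathlib

section
/- Let n, n', m, x be natural numbers with x ≤ m ≤ n ≤ n'. Then C(n, x)·C(n', m−x) ≥ C(n, m). Consequently, among all hypergeometric probabilities q(X) = C(n,X)·C(n',m−X)/C(n+n',m) with 0 ≤ X ≤ m, the smallest is q(m) = C(n,m)/C(n+n',m), attained at the most biased contingency table X = m. -/
/-! Counting `m`-subsets of `[n]` through a fixed `y`-subset shows
`C(n,m)·C(m,y) = C(n,y)·C(n-y,m-y)`; as `C(m,y) ≥ 1` and `n - y ≤ n'`, this gives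
`C(n,m) ≤ C(n,y)·C(n',m-y)`; the hypergeometric probabilities share one denominator. -/

/-- The hypergeometric probability q(X) = C(n,X)·C(n',m−X) / C(n+n',m). -/
def hypergeomProb (n n' m X : ℕ) : ℚ :=
  (n.choose X * n'.choose (m - X) : ℚ) / ((n + n').choose m)

theorem Nat.choose_le_choose_mul_choose_sub {n n' m y : ℕ} (hy : y ≤ m) (hn : n - y ≤ n') :
    n.choose m ≤ n.choose y * n'.choose (m - y) :=
  calc n.choose m ≤ n.choose m * m.choose y := Nat.le_mul_of_pos_right _ (Nat.choose_pos hy)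
    _ = n.choose y * (n - y).choose (m - y) := Nat.choose_mul hy
    _ ≤ n.choose y * n'.choose (m - y) :=
      Nat.mul_le_mul_left _ (Nat.choose_le_choose _ hn)

theorem hypergeomProb_self (n n' m : ℕ) :
    hypergeomProb n n' m m = (n.choose m : ℚ) / ((n + n').choose m) := by
  simp [hypergeomProb]

theorem hypergeomProb_self_le {n n' m X : ℕ} (hX : X ≤ m) (hn : n - X ≤ n') :
    hypergeomProb n n' m m ≤ hypergeomProb n n' m X := by
  rw [hypergeomProb_self, hypergeomProb]
  gcongr
  exact_mod_cast Nat.choose_le_choose_mul_choose_sub hX hn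

theorem hypergeom_min_at_most_biased_general
    (n n' m x : ℕ) (hxm : x ≤ m) (hnn' : n ≤ n') :
    n.choose m ≤ n.choose x * n'.choose (m - x) ∧
    (∀ X : ℕ, X ≤ m →
      hypergeomProb n n' m m ≤ hypergeomProb n n' m X) ∧
    hypergeomProb n n' m m = (n.choose m : ℚ) / ((n + n').choose m) :=
  ⟨Nat.choose_le_choose_mul_choose_sub hxm ((n.sub_le x).trans hnn'),
    fun X hX => hypergeomProb_self_le hX ((n.sub_le X).trans hnn'),
    hypergeomProb_self n n' m⟩

theorem hypergeom_min_at_most_biased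
    (n n' m x : ℕ) (hxm : x ≤ m) (hmn : m ≤ n) (hnn' : n ≤ n') :
    n.choose m ≤ n.choose x * n'.choose (m - x) ∧
    (∀ X : ℕ, X ≤ m →
      hypergeomProb n n' m m ≤ hypergeomProb n n' m X) ∧
    hypergeomProb n n' m m = (n.choose m : ℚ) / ((n + n').choose m) :=
  hypergeom_min_at_most_biased_general n n' m x hxm hnn'
end

section
/- (Proposition 1) Let n, n' be natural numbers with 1 ≤ n ≤ n', let H be a finite set with a frequency function f : H → ℕ, let α be a positive rational, and let ψ be the minimum attainable p-value function. Suppose σ_rt is a natural number with 1 ≤ σ_rt ≤ n such that |{h ∈ H : f(h) ≥ σ_rt − 1}| > α/ψ(σ_rt − 1) and |{h ∈ H : f(h) ≥ σ_rt}| ≤ α/ψ(σ_rt). Set k_rt := α/ψ(σ_rt). Then the set of testable elements coincides with the set of frequent elements at threshold σ_rt: {h ∈ H : ψ(f(h)) ≤ α/k_rt} = {h ∈ H : f(h) ≥ σ_rt}, and in particular |{h ∈ H : ψ(f(h)) ≤ α/k_rt}| ≤ k_rt. -/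
/-- The minimum attainable p-value function: ψ(σ) = C(n,σ)/C(n+n',σ) for σ ≤ n,
and ψ(σ) = 1/C(n+n',n) for σ > n. -/
def minPValue (n n' : ℕ) (σ : ℕ) : ℚ :=
  if σ ≤ n then (n.choose σ : ℚ) / ((n + n').choose σ)
  else 1 / ((n + n').choose n)

lemma psi_pos (n n' σ : ℕ) (h : σ ≤ n) : 0 < minPValue n n' σ := by
  rw [minPValue, if_pos h]
  have h1 : 0 < n.choose σ := Nat.choose_pos h
  have h2 : 0 < (n + n').choose σ := Nat.choose_pos (le_trans h (Nat.le_add_right _ _))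
  positivity

lemma psi_step (n n' σ : ℕ) (hn' : 1 ≤ n') (h : σ < n) :
    minPValue n n' (σ + 1) < minPValue n n' σ := by
  rw [minPValue, minPValue, if_pos (by omega : σ + 1 ≤ n), if_pos (le_of_lt h)]
  have h1 : n.choose (σ+1) * (σ+1) = n.choose σ * (n - σ) := Nat.choose_succ_right_eq n σ
  have h2 : (n+n').choose (σ+1) * (σ+1) = (n+n').choose σ * (n + n' - σ) :=
    Nat.choose_succ_right_eq (n+n') σ
  have hc1 : 0 < n.choose σ := Nat.choose_pos (le_of_lt h)
  have hc2 : 0 < (n+n').choose σ := Nat.choose_pos (by omega)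
  have h3 : n - σ < n + n' - σ := by omega
  have key : n.choose (σ+1) * (n+n').choose σ < n.choose σ * (n+n').choose (σ+1) := by
    have hm : n.choose (σ+1) * (n+n').choose σ * (σ+1) < n.choose σ * (n+n').choose (σ+1) * (σ+1) := by
      calc n.choose (σ+1) * (n+n').choose σ * (σ+1)
          = (n.choose (σ+1) * (σ+1)) * (n+n').choose σ := by ring
        _ = n.choose σ * (n+n').choose σ * (n - σ) := by rw [h1]; ring
        _ < n.choose σ * (n+n').choose σ * (n + n' - σ) :=
            mul_lt_mul_of_pos_left h3 (Nat.mul_pos hc1 hc2)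
        _ = n.choose σ * ((n+n').choose (σ+1) * (σ+1)) := by rw [h2]; ring
        _ = n.choose σ * (n+n').choose (σ+1) * (σ+1) := by ring
    exact Nat.lt_of_mul_lt_mul_right hm
  have hd1 : (0:ℚ) < ((n+n').choose (σ+1) : ℚ) := by
    exact_mod_cast Nat.choose_pos (by omega : σ + 1 ≤ n + n')
  have hd2 : (0:ℚ) < ((n+n').choose σ : ℚ) := by exact_mod_cast hc2
  rw [div_lt_div_iff₀ hd1 hd2]
  exact_mod_cast key

lemma psi_strict (n n' : ℕ) (hn' : 1 ≤ n') :
    ∀ t s : ℕ, s < t → t ≤ n → minPValue n n' t < minPValue n n' s := by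
  intro t
  induction t with
  | zero => omega
  | succ t ih =>
    intro s hs ht
    have hstep := psi_step n n' t hn' (by omega)
    rcases eq_or_lt_of_le (Nat.lt_succ_iff.mp hs) with rfl | hlt
    · exact hstep
    · exact lt_trans hstep (ih s hlt (by omega))

lemma psi_of_ge (n n' t : ℕ) (h : n ≤ t) :
    minPValue n n' t = 1 / ((n + n').choose n) := by
  rw [minPValue]
  rcases eq_or_lt_of_le h with rfl | hlt
  · rw [if_pos le_rfl, Nat.choose_self]; norm_num
  · rw [if_neg (by omega)]

lemma psi_antitone (n n' : ℕ) (hn' : 1 ≤ n') {s t : ℕ} (h : s ≤ t) :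
    minPValue n n' t ≤ minPValue n n' s := by
  by_cases ht : t ≤ n
  · rcases eq_or_lt_of_le h with rfl | hlt
    · exact le_rfl
    · exact le_of_lt (psi_strict n n' hn' t s hlt ht)
  · rw [psi_of_ge n n' t (by omega)]
    by_cases hs : s ≤ n
    · rw [← psi_of_ge n n' n le_rfl]
      rcases eq_or_lt_of_le hs with rfl | hlt
      · exact le_rfl
      · exact le_of_lt (psi_strict n n' hn' n s hlt le_rfl)
    · rw [psi_of_ge n n' s (by omega)]

/-- Proposition 1: the set of testable subgraphs coincides with the set of
frequent subgraphs at the root frequency threshold σ_rt, with k_rt = α/ψ(σ_rt). -/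
theorem testable_eq_frequent_at_root_frequency
    {β : Type*} [DecidableEq β]
    (n n' : ℕ) (hn : 1 ≤ n) (hnn' : n ≤ n')
    (H : Finset β) (f : β → ℕ) (α : ℚ) (hα : 0 < α)
    (σrt : ℕ) (hσ1 : 1 ≤ σrt) (hσn : σrt ≤ n)
    (hbelow : α / minPValue n n' (σrt - 1) <
      ((H.filter fun h => σrt - 1 ≤ f h).card : ℚ))
    (habove : ((H.filter fun h => σrt ≤ f h).card : ℚ) ≤
      α / minPValue n n' σrt) :
    (H.filter fun h => minPValue n n' (f h) ≤ α / (α / minPValue n n' σrt)) =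
      (H.filter fun h => σrt ≤ f h) ∧
    (((H.filter fun h =>
        minPValue n n' (f h) ≤ α / (α / minPValue n n' σrt)).card : ℚ) ≤
      α / minPValue n n' σrt) := by

  have hn' : 1 ≤ n' := le_trans hn hnn'
  have hψ : 0 < minPValue n n' σrt := psi_pos n n' σrt hσn
  have hdd : α / (α / minPValue n n' σrt) = minPValue n n' σrt := by
    field_simp
  have hkey : ∀ τ : ℕ, (minPValue n n' τ ≤ minPValue n n' σrt ↔ σrt ≤ τ) := by
    intro τ
    constructor
    · intro hle
      by_contra hlt
      push_neg at hlt
      exact absurd hle (not_le.mpr (psi_strict n n' hn' σrt τ hlt hσn))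
    · intro h
      exact psi_antitone n n' hn' h
  have heq : (H.filter fun h => minPValue n n' (f h) ≤ α / (α / minPValue n n' σrt)) =
      (H.filter fun h => σrt ≤ f h) := by
    ext h
    simp only [Finset.mem_filter, hdd, hkey]
  exact ⟨heq, by rw [heq]; exact habove⟩
end
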